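/- Let k, n ∈ ℕ and let t_1 < … < t_n be nonzero integers with |t_j| ≥ k for every 1 ≤ j ≤ n. For a nonzero integer t, let c_t = (-1)^{-t}/((-t+1)!) if t < 0 and c_t = (-1)^{t+1}·t! if t > 0. Then the map from {1,…,k}^n to ℚ sending (w_1,…,w_n) to Σ_{j=1}^n w_j·c_{t_j} is injective; hence it is a bijection from the set of words of length n over the alphabet {1,…,k} onto the set ℚ(t_1,…,t_n,k) = {Σ_{j=1}^n q_j·c_{t_j} : 1 ≤ q_j ≤ k for each j}, which therefore has exactly k^n elements. -/

import Mathlib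

/-!
The absolute values `a t = |c_t|` satisfy `a (t + 1) = (|t| + 1) · a t` for every integer `t`
(also across `t = 0`, where the defining formula gives `c_0 = -1`). Hence
`|t| · a t = a (t + 1) - a t`, and summing over any finite set of indices below `u` gives
`∑ |t| · a t < a u`. So in a vanishing combination `∑ d_t c_t = 0` with `|d_t| ≤ |t|` the term
of largest index cannot be cancelled by the others, and induction forces all `d_t = 0`. The
difference of two words in `{1,…,k}^n` has entries of absolute value `< k ≤ |t_j|`, which gives
injectivity, and the count `k^n` follows.
-/

/-- The coefficient `c_t` attached to a nonzero integer index `t`: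
`c_t = (-1)^{-t}/((-t+1)!)` for `t < 0` and `c_t = (-1)^{t+1}·t!` for `t > 0`. -/
def ratCoeff (t : ℤ) : ℚ :=
  if t < 0 then (-1 : ℚ) ^ (-t).toNat / ((-t).toNat + 1).factorial
  else (-1 : ℚ) ^ (t.toNat + 1) * (t.toNat).factorial

lemma abs_ratCoeff_natCast (m : ℕ) : |ratCoeff m| = m.factorial := by
  rw [ratCoeff, if_neg (by omega)]
  simp [abs_mul]

lemma abs_ratCoeff_neg_natCast_sub_one (m : ℕ) :
    |ratCoeff (-m - 1)| = ((m + 2).factorial : ℚ)⁻¹ := by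
  rw [ratCoeff, if_pos (by omega), show (-(-(m : ℤ) - 1)).toNat = m + 1 by omega]
  simp [abs_div]

lemma abs_ratCoeff_add_one (t : ℤ) : |ratCoeff (t + 1)| = (|(t : ℚ)| + 1) * |ratCoeff t| := by
  rcases le_or_gt 0 t with ht | ht
  · lift t to ℕ using ht
    rw [← Nat.cast_one, ← Nat.cast_add, abs_ratCoeff_natCast, abs_ratCoeff_natCast,
      Nat.factorial_succ]
    push_cast
    rw [abs_of_nonneg (by positivity)]
  obtain rfl | ht := eq_or_lt_of_le (Int.le_sub_one_of_lt ht)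
  · norm_num [ratCoeff]
  obtain ⟨m, rfl⟩ : ∃ m : ℕ, t = -(m + 1 : ℕ) - 1 := ⟨(-t - 2).toNat, by omega⟩
  rw [show -((m + 1 : ℕ) : ℤ) - 1 + 1 = -m - 1 by push_cast; ring,
    abs_ratCoeff_neg_natCast_sub_one, abs_ratCoeff_neg_natCast_sub_one,
    Nat.factorial_succ (m + 2)]
  push_cast
  rw [abs_of_nonpos (by linarith)]
  field_simp
  ring

lemma abs_ratCoeff_pos (t : ℤ) : 0 < |ratCoeff t| := by
  rcases le_or_gt 0 t with ht | ht
  · lift t to ℕ using ht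
    rw [abs_ratCoeff_natCast]
    positivity
  · obtain ⟨m, rfl⟩ : ∃ m : ℕ, t = -m - 1 := ⟨(-t - 1).toNat, by omega⟩
    rw [abs_ratCoeff_neg_natCast_sub_one]
    positivity

lemma monotone_abs_ratCoeff : Monotone fun t => |ratCoeff t| :=
  monotone_int_of_le_succ fun t => by
    rw [abs_ratCoeff_add_one]
    nlinarith [abs_nonneg (t : ℚ), abs_ratCoeff_pos t]

lemma sum_abs_mul_abs_ratCoeff_lt (S : Finset ℤ) {u : ℤ} (hS : ∀ t ∈ S, t < u) :
    ∑ t ∈ S, |(t : ℚ)| * |ratCoeff t| < |ratCoeff u| := by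
  induction S using Finset.induction_on_max generalizing u with
  | empty => simpa using abs_ratCoeff_pos u
  | insert a S hlt ih =>
    have ha : a + 1 ≤ u := hS a (Finset.mem_insert_self a S)
    rw [Finset.sum_insert fun haS => (hlt a haS).false]
    calc |(a : ℚ)| * |ratCoeff a| + ∑ t ∈ S, |(t : ℚ)| * |ratCoeff t|
        < |(a : ℚ)| * |ratCoeff a| + |ratCoeff a| := by gcongr; exact ih hlt
      _ = |ratCoeff (a + 1)| := by rw [abs_ratCoeff_add_one]; ring
      _ ≤ |ratCoeff u| := monotone_abs_ratCoeff ha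

lemma eq_zero_of_sum_mul_ratCoeff_eq_zero {ι : Type*} (s : Finset ι) {t : ι → ℤ}
    (ht : Set.InjOn t s) {d : ι → ℤ} (hd : ∀ i ∈ s, |d i| ≤ |t i|)
    (hsum : ∑ i ∈ s, (d i : ℚ) * ratCoeff (t i) = 0) : ∀ i ∈ s, d i = 0 := by
  classical
  induction s using Finset.induction_on_max_value t with
  | empty => simp
  | insert a s has hle ih =>
    rw [Finset.sum_insert has] at hsum
    have hlt : ∀ i ∈ s, t i < t a := fun i hi =>
      (hle i hi).lt_of_ne fun h => has (ht (by simp [hi]) (by simp) h ▸ hi)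
    have hrest : |∑ i ∈ s, (d i : ℚ) * ratCoeff (t i)| < |ratCoeff (t a)| := by
      calc |∑ i ∈ s, (d i : ℚ) * ratCoeff (t i)|
          ≤ ∑ i ∈ s, |((t i : ℤ) : ℚ)| * |ratCoeff (t i)| := by
            refine (Finset.abs_sum_le_sum_abs _ _).trans (Finset.sum_le_sum fun i hi => ?_)
            rw [abs_mul, ← Int.cast_abs, ← Int.cast_abs]
            exact mul_le_mul_of_nonneg_right (Int.cast_le.mpr (hd i (by simp [hi])))
              (abs_nonneg _)
        _ = ∑ x ∈ s.image t, |(x : ℚ)| * |ratCoeff x| := by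
            rw [Finset.sum_image (ht.mono (Finset.coe_subset.2 (Finset.subset_insert a s)))]
        _ < |ratCoeff (t a)| := sum_abs_mul_abs_ratCoeff_lt _ (by simpa using hlt)
    have hda : d a = 0 := by
      by_contra hda
      have : |ratCoeff (t a)| ≤ |(d a : ℚ) * ratCoeff (t a)| := by
        rw [abs_mul]
        exact le_mul_of_one_le_left (abs_nonneg _) (by exact_mod_cast Int.one_le_abs hda)
      rw [add_eq_zero_iff_eq_neg.mp hsum, abs_neg] at this
      exact this.not_gt hrest
    have hs : ∀ i ∈ s, d i = 0 := ih (ht.mono (by simp)) (fun i hi => hd i (by simp [hi]))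
      (by simpa [hda] using hsum)
    simpa [hda] using hs

lemma injOn_sum_mul_ratCoeff {ι : Type*} [Fintype ι] {t : ι → ℤ} (ht : Function.Injective t)
    {k : ℕ} (htk : ∀ i, (k : ℤ) ≤ |t i|) :
    Set.InjOn (fun w : ι → ℕ => ∑ i, (w i : ℚ) * ratCoeff (t i))
      {w : ι → ℕ | ∀ i, 1 ≤ w i ∧ w i ≤ k} := by
  intro w hw v hv hwv
  have hd := eq_zero_of_sum_mul_ratCoeff_eq_zero Finset.univ ht.injOn
    (d := fun i => (w i : ℤ) - v i)
    (fun i _ => (abs_sub_le_iff.2 ⟨by grind, by grind⟩).trans (htk i))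
    (by simpa [sub_mul] using sub_eq_zero.2 hwv)
  funext i
  have := hd i (Finset.mem_univ i)
  omega

lemma ncard_setOf_forall_one_le_and_le (ι : Type*) [Fintype ι] (k : ℕ) :
    {w : ι → ℕ | ∀ i, 1 ≤ w i ∧ w i ≤ k}.ncard = k ^ Fintype.card ι := by
  classical
  have : {w : ι → ℕ | ∀ i, 1 ≤ w i ∧ w i ≤ k} =
      ↑(Fintype.piFinset fun _ : ι => Finset.Icc 1 k) := by
    ext w
    simp only [Set.mem_ofPred_eq, Finset.mem_coe, Fintype.mem_piFinset, Finset.mem_Icc]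
  rw [this, Set.ncard_coe_finset, Fintype.card_piFinset]
  simp

theorem words_to_rationals_injective_general (k n : ℕ) (t : Fin n → ℤ) (ht : StrictMono t)
    (htk : ∀ j, (k : ℤ) ≤ |t j|) :
    Set.InjOn (fun w : Fin n → ℕ => ∑ j, (w j : ℚ) * ratCoeff (t j))
      {w : Fin n → ℕ | ∀ j, 1 ≤ w j ∧ w j ≤ k} ∧
    Set.ncard {x : ℚ | ∃ q : Fin n → ℕ, (∀ j, 1 ≤ q j ∧ q j ≤ k) ∧
      x = ∑ j, (q j : ℚ) * ratCoeff (t j)} = k ^ n := by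
  have hinj := injOn_sum_mul_ratCoeff ht.injective htk
  refine ⟨hinj, ?_⟩
  have himage : {x : ℚ | ∃ q : Fin n → ℕ, (∀ j, 1 ≤ q j ∧ q j ≤ k) ∧
      x = ∑ j, (q j : ℚ) * ratCoeff (t j)} =
      (fun w : Fin n → ℕ => ∑ j, (w j : ℚ) * ratCoeff (t j)) ''
        {w : Fin n → ℕ | ∀ j, 1 ≤ w j ∧ w j ≤ k} :=
    Set.ext fun x => exists_congr fun q => and_congr_right' eq_comm
  rw [himage, hinj.ncard_image, ncard_setOf_forall_one_le_and_le, Fintype.card_fin]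

/-- For nonzero integers `t_1 < … < t_n` with `|t_j| ≥ k`, the map sending a word
`(w_1,…,w_n) ∈ {1,…,k}^n` to `Σ_j w_j·c_{t_j}` is injective on `{1,…,k}^n`; hence it is a
bijection onto `ℚ(t_1,…,t_n,k) = {Σ_j q_j·c_{t_j} : 1 ≤ q_j ≤ k}`, which has exactly
`k^n` elements. -/
theorem words_to_rationals_injective (k n : ℕ) (t : Fin n → ℤ) (ht : StrictMono t)
    (ht0 : ∀ j, t j ≠ 0) (htk : ∀ j, (k : ℤ) ≤ |t j|) :
    Set.InjOn (fun w : Fin n → ℕ => ∑ j, (w j : ℚ) * ratCoeff (t j))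
      {w : Fin n → ℕ | ∀ j, 1 ≤ w j ∧ w j ≤ k} ∧
    Set.ncard {x : ℚ | ∃ q : Fin n → ℕ, (∀ j, 1 ≤ q j ∧ q j ≤ k) ∧
      x = ∑ j, (q j : ℚ) * ratCoeff (t j)} = k ^ n :=
  words_to_rationals_injective_general k n t ht htk
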